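/- arXiv:1111.1981 — 8 statements merged into one kernel-verified Lean document; each statement's English description precedes it below -/
import Mathlib

section
/- Let M be a module over a commutative ring, equipped with a decreasing filtration (Fⁿ M)_{n∈ℤ} and an increasing filtration (Gₙ M)_{n∈ℤ}, both exhaustive (union is M) and separated. If for every n ∈ ℤ the addition map Fⁿ M ⊕ G_{n-1} M → M is an isomorphism, then there exists a grading M = ⊕_{n∈ℤ} Mⁿ (namely Mⁿ = Fⁿ M ∩ Gₙ M) such that Fⁿ M = ⊕_{i≥n} Mⁱ and Gₙ M = ⊕_{i≤n} Mⁱ for all n. -/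
/-!
Write `Mⁿ = Fⁿ ⊓ Gₙ`. Since `Fⁿ` and `G_{n-1}` are complements and `G_{n-1} ≤ Gₙ`, the modular
law gives `Gₙ = G_{n-1} ⊔ Mⁿ`; inductively `Fⁿ ⊓ Gₘ ≤ ⨆_{i ≥ n} Mⁱ` for every `m`, and since `G`
is exhaustive and infima distribute over directed suprema of submodules, `Fⁿ = ⨆_{i ≥ n} Mⁱ`.
The formula for `G` follows by the symmetry `n ↦ -n` exchanging `F` and `G`. Independence holds
because the `Mⁱ` with `i ≠ n` lie in `G_{n-1} ⊔ F^{n+1}`, which the modular law shows to meet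
`Mⁿ` only in `Fⁿ ⊓ G_{n-1} = ⊥`.
-/

section OppositeFiltration

variable {α : Type*} [CompleteLattice α] [IsModularLattice α] {F G : ℤ → α}

theorem sup_inf_succ_eq_of_isCompl_pred (hG : Monotone G)
    (hcompl : ∀ n, IsCompl (F n) (G (n - 1))) (m : ℤ) :
    G m ⊔ F (m + 1) ⊓ G (m + 1) = G (m + 1) := by
  have hcompl' := hcompl (m + 1)
  rw [add_sub_cancel_right] at hcompl'
  rw [← sup_inf_assoc_of_le _ (hG (Int.le_add_one le_rfl)), hcompl'.symm.sup_eq_top, top_inf_eq]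

theorem inf_le_iSup_inf_of_isCompl_pred (hF : Antitone F) (hG : Monotone G)
    (hcompl : ∀ n, IsCompl (F n) (G (n - 1))) (n m : ℤ) :
    F n ⊓ G m ≤ ⨆ i, ⨆ _ : n ≤ i, F i ⊓ G i := by
  obtain hm | hm := le_total m (n - 1)
  · simp [((hcompl n).disjoint.mono_right (hG hm)).eq_bot]
  induction m, hm using Int.leInduction with
  | base => simp [(hcompl n).inf_eq_bot]
  | succ m hm ih =>
    have hnm : n ≤ m + 1 := by omega
    rw [← sup_inf_succ_eq_of_isCompl_pred hG hcompl m,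
      ← inf_sup_assoc_of_le _ (inf_le_left.trans (hF hnm))]
    exact sup_le ih (le_iSup₂_of_le (m + 1) hnm le_rfl)

theorem eq_iSup_ge_inf_of_isCompl_pred [IsCompactlyGenerated α] (hF : Antitone F)
    (hG : Monotone G) (hGexh : ⨆ n, G n = ⊤)
    (hcompl : ∀ n, IsCompl (F n) (G (n - 1))) (n : ℤ) :
    F n = ⨆ i, ⨆ _ : n ≤ i, F i ⊓ G i := by
  refine le_antisymm ?_ (iSup₂_le fun i hi => inf_le_left.trans (hF hi))
  calc F n = ⨆ m, F n ⊓ G m := by rw [← hG.directed_le.inf_iSup_eq, hGexh, inf_top_eq]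
    _ ≤ _ := iSup_le (inf_le_iSup_inf_of_isCompl_pred hF hG hcompl n)

theorem eq_iSup_le_inf_of_isCompl_pred [IsCompactlyGenerated α] (hF : Antitone F)
    (hG : Monotone G) (hFexh : ⨆ n, F n = ⊤)
    (hcompl : ∀ n, IsCompl (F n) (G (n - 1))) (n : ℤ) :
    G n = ⨆ i, ⨆ _ : i ≤ n, F i ⊓ G i := by
  have hcompl' (n : ℤ) : IsCompl (G (-n)) (F (-(n - 1))) := by
    simpa [sub_eq_add_neg, add_comm] using (hcompl (-(n - 1))).symm
  have := eq_iSup_ge_inf_of_isCompl_pred (F := G ∘ Neg.neg) (G := F ∘ Neg.neg)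
    (hG.comp_antitone fun _ _ h => neg_le_neg h) (hF.comp fun _ _ h => neg_le_neg h)
    ((Equiv.neg ℤ).iSup_comp.trans hFexh) hcompl' (-n)
  simp only [Function.comp_apply, neg_neg] at this
  rw [this, ← (Equiv.neg ℤ).iSup_comp]
  simp [inf_comm]

theorem iSupIndep_inf_of_isCompl_pred (hF : Antitone F) (hG : Monotone G)
    (hcompl : ∀ n, IsCompl (F n) (G (n - 1))) :
    iSupIndep fun n => F n ⊓ G n := by
  intro n
  have hle : ⨆ i, ⨆ _ : i ≠ n, F i ⊓ G i ≤ G (n - 1) ⊔ F (n + 1) := by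
    refine iSup₂_le fun i hi => ?_
    rcases hi.lt_or_gt with h | h
    · exact le_sup_of_le_left (inf_le_right.trans (hG (by omega)))
    · exact le_sup_of_le_right (inf_le_left.trans (hF (by omega)))
  have hdisj : F (n + 1) ⊓ G n = ⊥ := by
    simpa using (hcompl (n + 1)).inf_eq_bot
  refine Disjoint.mono_right hle (disjoint_iff.2 ?_)
  calc F n ⊓ G n ⊓ (G (n - 1) ⊔ F (n + 1))
        = F n ⊓ ((G (n - 1) ⊔ F (n + 1)) ⊓ G n) := by ac_rfl
    _ = F n ⊓ G (n - 1) := by rw [sup_inf_assoc_of_le _ (hG (by omega)), hdisj, sup_bot_eq]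
    _ = ⊥ := (hcompl n).inf_eq_bot

end OppositeFiltration

theorem statement0_general {R M : Type*} [CommRing R] [AddCommGroup M] [Module R M]
    (F G : ℤ → Submodule R M)
    (hF : Antitone F) (hG : Monotone G)
    (hFexh : ⨆ n, F n = ⊤)
    (hGexh : ⨆ n, G n = ⊤)
    (hcompl : ∀ n : ℤ, IsCompl (F n) (G (n - 1))) :
    DirectSum.IsInternal (fun n : ℤ => F n ⊓ G n) ∧
      (∀ n : ℤ, F n = ⨆ i : ℤ, ⨆ _ : n ≤ i, (F i ⊓ G i)) ∧
      (∀ n : ℤ, G n = ⨆ i : ℤ, ⨆ _ : i ≤ n, (F i ⊓ G i)) := by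
  have hGeq := eq_iSup_le_inf_of_isCompl_pred hF hG hFexh hcompl
  refine ⟨?_, eq_iSup_ge_inf_of_isCompl_pred hF hG hGexh hcompl, hGeq⟩
  refine (DirectSum.isInternal_submodule_iff_iSupIndep_and_iSup_eq_top _).2
    ⟨iSupIndep_inf_of_isCompl_pred hF hG hcompl, eq_top_iff.2 ?_⟩
  rw [← hGexh]
  exact iSup_le fun n => (hGeq n).le.trans (iSup₂_le fun i _ => le_iSup (fun i => F i ⊓ G i) i)

/-- **Opposite filtrations from complementarity.**
Let `M` be a module over a commutative ring with a decreasing filtration `F` and an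
increasing filtration `G`, both exhaustive and separated. If for every `n` the addition
map `F n ⊕ G (n-1) → M` is an isomorphism (i.e. `F n` and `G (n-1)` are complementary
submodules), then the submodules `Mⁿ := F n ⊓ G n` form a grading of `M` such that
`F n = ⨆ i ≥ n, Mⁱ` and `G n = ⨆ i ≤ n, Mⁱ`. -/
theorem statement0 {R M : Type*} [CommRing R] [AddCommGroup M] [Module R M]
    (F G : ℤ → Submodule R M)
    (hF : Antitone F) (hG : Monotone G)
    (hFexh : ⨆ n, F n = ⊤) (hFsep : ⨅ n, F n = ⊥)
    (hGexh : ⨆ n, G n = ⊤) (hGsep : ⨅ n, G n = ⊥)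
    (hcompl : ∀ n : ℤ, IsCompl (F n) (G (n - 1))) :
    DirectSum.IsInternal (fun n : ℤ => F n ⊓ G n) ∧
      (∀ n : ℤ, F n = ⨆ i : ℤ, ⨆ _ : n ≤ i, (F i ⊓ G i)) ∧
      (∀ n : ℤ, G n = ⨆ i : ℤ, ⨆ _ : i ≤ n, (F i ⊓ G i)) :=
  statement0_general F G hF hG hFexh hGexh hcompl
end

section
/- Let M be a module with a decreasing filtration (Fⁿ M) and an increasing filtration (Gₙ M), and suppose for all n the addition map Fⁿ M ⊕ G_{n-1} M → M is an isomorphism. Then for all integers a ≤ b one has Fᵃ M ∩ G_b M = ⊕_{a ≤ n ≤ b} (Fⁿ M ∩ Gₙ M) (an internal direct sum). -/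
/-!
The argument only uses that submodules form a modular lattice. Modularity together with
`Fᵇ ⊔ G_{b-1} = ⊤` splits `Fᵃ ⊓ G_b` as `(Fᵃ ⊓ G_{b-1}) ⊔ (Fᵇ ⊓ G_b)`, and induction on `b`
gives the sum formula. For independence, every `Fʲ ⊓ Gⱼ` with `j ≠ i` lies in
`F^{i+1} ⊔ G_{i-1}`, and modularity together with `Fⁱ ⊓ G_{i-1} = ⊥` and
`F^{i+1} ⊓ Gᵢ = ⊥` shows that this meets `Fⁱ ⊓ Gᵢ` trivially.
-/

namespace OppositeFiltrations

variable {α : Type*} {F G : ℤ → α}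

section Lattice

variable [Lattice α] [IsModularLattice α]

theorem inf_eq_inf_pred_sup_inf [OrderTop α] (hF : Antitone F) (hG : Monotone G)
    (hcodisj : ∀ n, Codisjoint (F n) (G (n - 1))) {a b : ℤ} (hab : a ≤ b) :
    F a ⊓ G b = (F a ⊓ G (b - 1)) ⊔ (F b ⊓ G b) := by
  have hGb : G (b - 1) ⊔ F b ⊓ G b = G b := by
    rw [sup_comm, inf_comm (F b), inf_sup_assoc_of_le _ (hG (by omega)), (hcodisj b).eq_top,
      inf_top_eq]
  rw [inf_sup_assoc_of_le _ (inf_le_of_left_le (hF hab)), hGb]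

theorem disjoint_inf_sup_succ_pred [OrderBot α] (hF : Antitone F)
    (hdisj : ∀ n, Disjoint (F n) (G (n - 1))) (i : ℤ) :
    Disjoint (F i ⊓ G i) (F (i + 1) ⊔ G (i - 1)) := by
  have hFi : F i ⊓ (F (i + 1) ⊔ G (i - 1)) = F (i + 1) := by
    rw [sup_comm, ← inf_sup_assoc_of_le _ (hF (by omega)), (hdisj i).eq_bot, bot_sup_eq]
  have hsucc : Disjoint (F (i + 1)) (G i) := by simpa using hdisj (i + 1)
  rw [disjoint_iff, inf_right_comm, hFi]
  exact hsucc.eq_bot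

end Lattice

variable [CompleteLattice α] [IsModularLattice α]

theorem iSupIndep_inf (hF : Antitone F) (hG : Monotone G)
    (hdisj : ∀ n, Disjoint (F n) (G (n - 1))) : iSupIndep fun n ↦ F n ⊓ G n := by
  intro i
  refine (disjoint_inf_sup_succ_pred hF hdisj i).mono_right (iSup₂_le fun j hj ↦ ?_)
  rcases hj.lt_or_gt with hlt | hgt
  · exact inf_le_right.trans <| (hG (by omega)).trans le_sup_right
  · exact inf_le_left.trans <| (hF (by omega)).trans le_sup_left

theorem inf_eq_iSup_Icc (hF : Antitone F) (hG : Monotone G)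
    (hcodisj : ∀ n, Codisjoint (F n) (G (n - 1))) {a b : ℤ} (hab : a ≤ b) :
    F a ⊓ G b = ⨆ n ∈ Set.Icc a b, F n ⊓ G n := by
  induction b, hab using Int.leInduction with
  | base => simp
  | succ b hab ih =>
    have hIcc : Set.Icc a (b + 1) = insert (b + 1) (Set.Icc a b) := by
      ext n; simp only [Set.mem_Icc, Set.mem_insert_iff]; omega
    rw [hIcc, iSup_insert, ← ih, sup_comm,
      inf_eq_inf_pred_sup_inf hF hG hcodisj (by omega : a ≤ b + 1), add_sub_cancel_right]

end OppositeFiltrations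

open OppositeFiltrations in
theorem statement2_general {R M : Type*} [CommRing R] [AddCommGroup M] [Module R M]
    (F G : ℤ → Submodule R M)
    (hF : Antitone F) (hG : Monotone G)
    (hcompl : ∀ n : ℤ, IsCompl (F n) (G (n - 1))) :
    iSupIndep (fun n : ℤ => F n ⊓ G n) ∧
      ∀ a b : ℤ, a ≤ b → F a ⊓ G b = ⨆ n ∈ Set.Icc a b, (F n ⊓ G n) :=
  ⟨iSupIndep_inf hF hG fun n ↦ (hcompl n).disjoint,
    fun _ _ hab ↦ inf_eq_iSup_Icc hF hG (fun n ↦ (hcompl n).codisjoint) hab⟩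

/-- If the addition maps `F n ⊕ G (n-1) → M` are isomorphisms for all `n`, then for all
integers `a ≤ b` one has `Fᵃ M ∩ G_b M = ⊕_{a ≤ n ≤ b} (Fⁿ M ∩ Gₙ M)` as an internal
direct sum: the submodules `F n ⊓ G n` are independent and their supremum over
`a ≤ n ≤ b` is `F a ⊓ G b`. -/
theorem statement2 {R M : Type*} [CommRing R] [AddCommGroup M] [Module R M]
    (F G : ℤ → Submodule R M)
    (hF : Antitone F) (hG : Monotone G)
    (hFexh : ⨆ n, F n = ⊤) (hFsep : ⨅ n, F n = ⊥)
    (hGexh : ⨆ n, G n = ⊤) (hGsep : ⨅ n, G n = ⊥)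
    (hcompl : ∀ n : ℤ, IsCompl (F n) (G (n - 1))) :
    iSupIndep (fun n : ℤ => F n ⊓ G n) ∧
      ∀ a b : ℤ, a ≤ b → F a ⊓ G b = ⨆ n ∈ Set.Icc a b, (F n ⊓ G n) :=
  statement2_general F G hF hG hcompl
end

section
/- Let (G_i)_{i∈I} be an inverse system of groups over a poset I. There is a bijection between the set of isomorphism classes of (G_i)-torsors (inverse systems of sets (X_i) with each X_i a simply transitive left G_i-set and equivariant transition maps) and the pointed set lim¹_{i∈I} G_i, under which the trivial torsor (G_i acting on itself by left multiplication) corresponds to the distinguished point. In particular, a (G_i)-torsor (X_i) has lim_{i∈I} X_i ≠ ∅ if and only if its class in lim¹ G_i is the distinguished point. -/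
section
universe u v

variable {I : Type u} [PartialOrder I] (G : I → Type v) [∀ i, Group (G i)]
  (π : ∀ ⦃j i : I⦄, j ≤ i → (G i →* G j))

/-- A torsor under an inverse system of groups `(G i)` with transition maps `π`:
an inverse system of nonempty sets `(X i)` with simply transitive left `G i`-actions
and equivariant transition maps. -/
structure InvSysTorsor where
  X : I → Type v
  act : ∀ i, G i → X i → X i
  act_one : ∀ i (x : X i), act i 1 x = x
  act_mul : ∀ i (g h : G i) (x : X i), act i (g * h) x = act i g (act i h x)
  nonempty : ∀ i, Nonempty (X i)
  simplyTrans : ∀ i (x y : X i), ∃! g : G i, act i g x = y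
  map : ∀ ⦃j i : I⦄, j ≤ i → X i → X j
  map_refl : ∀ (i : I) (h : i ≤ i) (x : X i), map h x = x
  map_trans : ∀ ⦃k j i : I⦄ (hkj : k ≤ j) (hji : j ≤ i) (x : X i),
    map hkj (map hji x) = map (hkj.trans hji) x
  equivariant : ∀ ⦃j i : I⦄ (h : j ≤ i) (g : G i) (x : X i),
    map h (act i g x) = act j (π h g) (map h x)

/-- Two torsors are related if there is an equivariant morphism of inverse systems
between them (such a morphism is automatically an isomorphism). -/
def TorsorRel (T T' : InvSysTorsor G π) : Prop :=
  ∃ φ : ∀ i, T.X i → T'.X i,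
    (∀ i (g : G i) (x : T.X i), φ i (T.act i g x) = T'.act i g (φ i x)) ∧
    (∀ ⦃j i : I⦄ (h : j ≤ i) (x : T.X i), φ j (T.map h x) = T'.map h (φ i x))

/-- The trivial torsor: `G i` acting on itself by left multiplication. -/
def trivialTorsor
    (hπrefl : ∀ (i : I) (h : i ≤ i), π h = MonoidHom.id (G i))
    (hπtrans : ∀ ⦃k j i : I⦄ (hkj : k ≤ j) (hji : j ≤ i) (x : G i),
      π hkj (π hji x) = π (hkj.trans hji) x) :
    InvSysTorsor G π where
  X := G
  act i g x := g * x
  act_one i x := one_mul x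
  act_mul i g h x := mul_assoc g h x
  nonempty i := ⟨1⟩
  simplyTrans i x y :=
    ⟨y * x⁻¹, inv_mul_cancel_right y x, fun g hg => eq_mul_inv_of_mul_eq hg⟩
  map _ _ h x := π h x
  map_refl i h x := by show π h x = x; rw [hπrefl i h]; rfl
  map_trans _ _ _ hkj hji x := hπtrans hkj hji x
  equivariant _ _ h g x := map_mul (π h) g x

/-- The set `Z` of cocycles: families `(g_j^i ∈ G j)_{j ≤ i}` with
`g_k^i = π_k^j(g_j^i) · g_k^j`. -/
def Cocycle : Type (max u v) :=
  {z : ∀ ⦃j i : I⦄, j ≤ i → G j //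
    ∀ ⦃k j i : I⦄ (hkj : k ≤ j) (hji : j ≤ i),
      z (hkj.trans hji) = π hkj (z hji) * z hkj}

/-- The coboundary relation on cocycles: the action of `∏ᵢ G i` by
`(b_i)·(g_j^i) = (π_j^i(b_i)·g_j^i·b_j⁻¹)`. -/
def CobRel (z z' : Cocycle G π) : Prop :=
  ∃ b : ∀ i, G i, ∀ ⦃j i : I⦄ (h : j ≤ i),
    z'.1 h = π h (b i) * z.1 h * (b j)⁻¹

/-- `lim¹` of the inverse system: the quotient of the set of cocycles by
coboundaries. -/
def lim1 : Type (max u v) := Quot (CobRel G π)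

/-- The distinguished point of `lim¹`: the class of the identity cocycle. -/
def lim1Base : lim1 G π :=
  Quot.mk _ ⟨fun _ _ _ => 1, fun _ _ _ _ _ => by simp⟩

/-!
Choosing a point `x i` in every fibre of a torsor `T`, the elements `g_j^i` with
`g_j^i • x j = T.map h (x i)` form a cocycle. Moving the points by `b i` moves the cocycle by
the coboundary action of `b`, and equivariant morphisms carry points to points with the same
cocycle, so `T` has a well-defined class in `lim¹`. Conversely, a cocycle `z` twists the
transition maps of the trivial torsor into `x ↦ π x * z`; at the points `1` this torsor has
cocycle `z`, and at the points `x` the torsor `T` is isomorphic to the twist by its cocycle.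
A compatible family of points is the same as a choice of points whose cocycle is trivial.
-/

section Classification
variable {G π}

namespace InvSysTorsor

variable (T : InvSysTorsor G π)

noncomputable def diff {i : I} (x y : T.X i) : G i :=
  (T.simplyTrans i x y).choose

theorem act_diff {i : I} (x y : T.X i) : T.act i (T.diff x y) x = y :=
  (T.simplyTrans i x y).choose_spec.1

theorem eq_diff_of_act_eq {i : I} {x y : T.X i} {g : G i} (h : T.act i g x = y) :
    g = T.diff x y :=
  (T.simplyTrans i x y).choose_spec.2 g h

noncomputable def cocycleOf (x : ∀ i, T.X i) : Cocycle G π :=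
  ⟨fun j _ h => T.diff (x j) (T.map h (x _)), fun k j i hkj hji => by
    refine (T.eq_diff_of_act_eq ?_).symm
    rw [T.act_mul, T.act_diff, ← T.equivariant, T.act_diff, T.map_trans]⟩

theorem act_cocycleOf (x : ∀ i, T.X i) {j i : I} (h : j ≤ i) :
    T.act j ((T.cocycleOf x).1 h) (x j) = T.map h (x i) :=
  T.act_diff _ _

theorem cocycleOf_apply_eq_one_iff (x : ∀ i, T.X i) {j i : I} (h : j ≤ i) :
    (T.cocycleOf x).1 h = 1 ↔ T.map h (x i) = x j := by
  constructor
  · intro h1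
    rw [← T.act_cocycleOf, h1, T.act_one]
  · intro hx
    exact (T.eq_diff_of_act_eq (by rw [T.act_one, hx])).symm

theorem cocycleOf_act (b : ∀ i, G i) (x : ∀ i, T.X i) {j i : I} (h : j ≤ i) :
    (T.cocycleOf fun i => T.act i (b i) (x i)).1 h =
      π h (b i) * (T.cocycleOf x).1 h * (b j)⁻¹ := by
  refine (T.eq_diff_of_act_eq ?_).symm
  rw [T.act_mul, T.act_mul, ← T.act_mul j (b j)⁻¹, inv_mul_cancel, T.act_one,
    T.act_cocycleOf]
  exact (T.equivariant h (b i) (x i)).symm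

theorem cobRel_cocycleOf (x y : ∀ i, T.X i) : CobRel G π (T.cocycleOf x) (T.cocycleOf y) := by
  have hy : (fun i => T.act i (T.diff (x i) (y i)) (x i)) = y := funext fun i => T.act_diff _ _
  refine ⟨fun i => T.diff (x i) (y i), fun j i h => ?_⟩
  simpa only [hy] using T.cocycleOf_act (fun i => T.diff (x i) (y i)) x h

theorem cocycleOf_comp_of_equivariant {T' : InvSysTorsor G π} (φ : ∀ i, T.X i → T'.X i)
    (hact : ∀ i (g : G i) (x : T.X i), φ i (T.act i g x) = T'.act i g (φ i x))
    (hmap : ∀ ⦃j i : I⦄ (h : j ≤ i) (x : T.X i), φ j (T.map h x) = T'.map h (φ i x))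
    (x : ∀ i, T.X i) : T'.cocycleOf (fun i => φ i (x i)) = T.cocycleOf x := by
  refine Subtype.ext (funext fun j => funext fun i => funext fun h => ?_)
  refine (T'.eq_diff_of_act_eq ?_).symm
  rw [← hact, T.act_cocycleOf, hmap]

end InvSysTorsor

theorem cobRel_equivalence : Equivalence (CobRel G π) where
  refl _ := ⟨fun _ => 1, fun _ _ _ => by simp⟩
  symm := by
    rintro z z' ⟨b, hb⟩
    refine ⟨fun i => (b i)⁻¹, fun j i h => ?_⟩
    rw [hb h, map_inv]
    group
  trans := by
    rintro z z' z'' ⟨b, hb⟩ ⟨b', hb'⟩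
    refine ⟨fun i => b' i * b i, fun j i h => ?_⟩
    rw [hb' h, hb h, map_mul]
    group

abbrev torsorOfCocycle
    (hπrefl : ∀ (i : I) (h : i ≤ i), π h = MonoidHom.id (G i))
    (hπtrans : ∀ ⦃k j i : I⦄ (hkj : k ≤ j) (hji : j ≤ i) (x : G i),
      π hkj (π hji x) = π (hkj.trans hji) x)
    (z : Cocycle G π) : InvSysTorsor G π where
  X := G
  act _ g x := g * x
  act_one _ := one_mul
  act_mul _ := mul_assoc
  nonempty _ := ⟨1⟩
  simplyTrans _ x y :=
    ⟨y * x⁻¹, inv_mul_cancel_right y x, fun _ hg => eq_mul_inv_of_mul_eq hg⟩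
  map _ _ h x := π h x * z.1 h
  map_refl i h x := by
    have hz : z.1 h = z.1 h * z.1 h := by simpa only [hπrefl i h, MonoidHom.id_apply] using z.2 h h
    rw [left_eq_mul.mp hz, hπrefl i h, mul_one, MonoidHom.id_apply]
  map_trans _ _ _ hkj hji x := by
    simp only [map_mul, hπtrans, z.2 hkj hji, mul_assoc]
  equivariant _ _ h g x := by
    simp only [map_mul, mul_assoc]

section
variable (hπrefl : ∀ (i : I) (h : i ≤ i), π h = MonoidHom.id (G i))
  (hπtrans : ∀ ⦃k j i : I⦄ (hkj : k ≤ j) (hji : j ≤ i) (x : G i),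
    π hkj (π hji x) = π (hkj.trans hji) x)

theorem cocycleOf_torsorOfCocycle (z : Cocycle G π) :
    (torsorOfCocycle hπrefl hπtrans z).cocycleOf (fun _ => 1) = z := by
  refine Subtype.ext (funext fun j => funext fun i => funext fun h => ?_)
  refine ((torsorOfCocycle hπrefl hπtrans z).eq_diff_of_act_eq ?_).symm
  change z.1 h * 1 = π h 1 * z.1 h
  rw [mul_one, map_one, one_mul]

theorem torsorRel_torsorOfCocycle_of_cobRel {z z' : Cocycle G π} (hzz' : CobRel G π z z') :
    TorsorRel G π (torsorOfCocycle hπrefl hπtrans z) (torsorOfCocycle hπrefl hπtrans z') := by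
  obtain ⟨b, hb⟩ := hzz'
  refine ⟨fun i x => x * (b i)⁻¹, fun i g x => mul_assoc g x _, fun j i h x => ?_⟩
  change π h x * z.1 h * (b j)⁻¹ = π h (x * (b i)⁻¹) * z'.1 h
  rw [hb h, map_mul, map_inv]
  group

theorem torsorRel_torsorOfCocycle_cocycleOf (T : InvSysTorsor G π) (x : ∀ i, T.X i) :
    TorsorRel G π (torsorOfCocycle hπrefl hπtrans (T.cocycleOf x)) T := by
  refine ⟨fun i g => T.act i g (x i), fun i g g' => T.act_mul i g g' _, fun j i h g => ?_⟩
  change T.act j (π h g * (T.cocycleOf x).1 h) (x j) = T.map h (T.act i g (x i))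
  rw [T.act_mul, T.act_cocycleOf, T.equivariant]

end

namespace InvSysTorsor

variable (T : InvSysTorsor G π)

noncomputable def lim1Class : lim1 G π :=
  Quot.mk _ (T.cocycleOf fun i => (T.nonempty i).some)

theorem lim1Class_eq (x : ∀ i, T.X i) : T.lim1Class = Quot.mk _ (T.cocycleOf x) :=
  Quot.sound (T.cobRel_cocycleOf _ _)

theorem lim1Class_eq_of_torsorRel {T' : InvSysTorsor G π} (hTT' : TorsorRel G π T T') :
    T.lim1Class = T'.lim1Class := by
  obtain ⟨φ, hact, hmap⟩ := hTT'
  rw [T.lim1Class_eq (fun i => (T.nonempty i).some),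
    T'.lim1Class_eq (fun i => φ i (T.nonempty i).some),
    T.cocycleOf_comp_of_equivariant φ hact hmap]

theorem exists_compatible_iff_lim1Class_eq_base :
    (∃ x : ∀ i, T.X i, ∀ ⦃j i : I⦄ (h : j ≤ i), T.map h (x i) = x j) ↔
      T.lim1Class = lim1Base G π := by
  constructor
  · rintro ⟨x, hx⟩
    rw [T.lim1Class_eq x]
    congr
    exact Subtype.ext (funext fun j => funext fun i => funext fun h =>
      (T.cocycleOf_apply_eq_one_iff x h).mpr (hx h))
  · intro hbase
    obtain ⟨b, hb⟩ := cobRel_equivalence.eqvGen_iff.mp (Quot.eq.mp hbase)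
    -- Moving the chosen points by `b` kills their cocycle.
    refine ⟨fun i => T.act i (b i) (T.nonempty i).some, fun j i h => ?_⟩
    exact (T.cocycleOf_apply_eq_one_iff _ h).mp ((T.cocycleOf_act b _ h).trans (hb h).symm)

end InvSysTorsor

noncomputable def torsorClassEquivLim1
    (hπrefl : ∀ (i : I) (h : i ≤ i), π h = MonoidHom.id (G i))
    (hπtrans : ∀ ⦃k j i : I⦄ (hkj : k ≤ j) (hji : j ≤ i) (x : G i),
      π hkj (π hji x) = π (hkj.trans hji) x) :
    Quot (TorsorRel G π) ≃ lim1 G π where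
  toFun := Quot.lift InvSysTorsor.lim1Class fun _ _ => InvSysTorsor.lim1Class_eq_of_torsorRel _
  invFun := Quot.lift (fun z => Quot.mk _ (torsorOfCocycle hπrefl hπtrans z))
    fun _ _ hzz' => Quot.sound (torsorRel_torsorOfCocycle_of_cobRel hπrefl hπtrans hzz')
  left_inv := Quot.ind fun T =>
    Quot.sound (torsorRel_torsorOfCocycle_cocycleOf hπrefl hπtrans T _)
  right_inv := Quot.ind fun z => by
    change (torsorOfCocycle hπrefl hπtrans z).lim1Class = _
    rw [InvSysTorsor.lim1Class_eq _ (fun _ => 1), cocycleOf_torsorOfCocycle]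

end Classification

/-- **Classification of torsors under an inverse system of groups by `lim¹`.**
There is a bijection between the set of isomorphism classes of `(G i)`-torsors and
the pointed set `lim¹ G i`, sending the class of the trivial torsor to the
distinguished point; moreover a torsor admits a compatible family of points
(i.e. `lim X i ≠ ∅`) if and only if its class corresponds to the distinguished
point. -/
theorem statement7
    (hπrefl : ∀ (i : I) (h : i ≤ i), π h = MonoidHom.id (G i))
    (hπtrans : ∀ ⦃k j i : I⦄ (hkj : k ≤ j) (hji : j ≤ i) (x : G i),
      π hkj (π hji x) = π (hkj.trans hji) x) :
    ∃ e : Quot (TorsorRel G π) ≃ lim1 G π,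
      e (Quot.mk _ (trivialTorsor G π hπrefl hπtrans)) = lim1Base G π ∧
      ∀ T : InvSysTorsor G π,
        ((∃ x : ∀ i, T.X i, ∀ ⦃j i : I⦄ (h : j ≤ i), T.map h (x i) = x j) ↔
          e (Quot.mk _ T) = lim1Base G π) := by
  refine ⟨torsorClassEquivLim1 hπrefl hπtrans, ?_, fun T =>
    T.exists_compatible_iff_lim1Class_eq_base⟩
  exact (trivialTorsor G π hπrefl hπtrans).exists_compatible_iff_lim1Class_eq_base.mp
    ⟨fun _ => (1 : G _), fun _ _ h => map_one (π h)⟩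

end
end

section
/- Let R be a commutative ring whose spectrum has finitely many connected components (e.g. R with finitely many idempotents), and let (M_i)_{i∈I} be an inverse system of R-modules indexed by a lattice I such that: (1) each M_i is finitely generated projective; (2) all transition maps μ_j^i : M_i → M_j (j ≤ i) are surjective; (3) for all i, j the square with vertices M_{i∨j}, M_i, M_j, M_{i∧j} is Cartesian. Then lim¹_{i∈I} M_i = 0, i.e. every torsor under the inverse system (M_i) admits a compatible family of points (lim of the torsor is nonempty). -/
/-!
A cocycle `z` twists the transition maps into `m ↦ μ h m - z h`. This is again an inverse
system of surjections with Cartesian squares (of torsors under `M`), and its compatible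
families are exactly the `b` with `z = δb`.

Such a family is built by Zorn's lemma on compatible families defined over lattice ideals `S`.
A family on `S` extends to the ideal generated by `S` and `x` as soon as it is the restriction
of a point `t` over `x`: for `s ∈ S`, `t` and the value at `s` glue along the Cartesian square
to a point over `x ⊔ s`, and uniqueness makes these points compatible in `s`. The point `t`
exists because the surjections between the `M y`, `y ∈ S`, `y ≤ x`, are eventually injective:
their ranks, summed over one point of each of the finitely many connected components of
`Spec R`, are bounded by that of `M x`, and a surjection of finitely generated projective
modules that preserves these locally constant ranks is bijective.
-/

open Module

section TotalRank

variable {R : Type*} [CommRing R] {M N : Type*} [AddCommGroup M] [Module R M]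
  [AddCommGroup N] [Module R N]

theorem rankAtStalk_le_of_surjective [Module.Finite R M] {f : M →ₗ[R] N}
    (hf : Function.Surjective f) (p : PrimeSpectrum R) : rankAtStalk N p ≤ rankAtStalk M p :=
  LinearMap.finrank_le_finrank_of_surjective (LocalizedModule.map_surjective _ f hf)

theorem rankAtStalk_surjInv_connectedComponent [Module.Finite R M] [Module.Projective R M]
    (p : PrimeSpectrum R) :
    rankAtStalk M (Function.surjInv ConnectedComponents.surjective_coe
      (p : ConnectedComponents (PrimeSpectrum R))) = rankAtStalk M p :=
  have := Module.finitePresentation_of_projective R M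
  isLocallyConstant_rankAtStalk.apply_eq_of_isPreconnected isPreconnected_connectedComponent
    (ConnectedComponents.coe_eq_coe'.mp (Function.surjInv_eq _ _)) mem_connectedComponent

variable (R) [Fintype (ConnectedComponents (PrimeSpectrum R))] in
noncomputable def totalRank (M : Type*) [AddCommGroup M] [Module R M] : ℕ :=
  ∑ c : ConnectedComponents (PrimeSpectrum R),
    rankAtStalk M (Function.surjInv ConnectedComponents.surjective_coe c)

variable [Fintype (ConnectedComponents (PrimeSpectrum R))]

theorem totalRank_le_of_surjective [Module.Finite R M] {f : M →ₗ[R] N}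
    (hf : Function.Surjective f) : totalRank R N ≤ totalRank R M :=
  Finset.sum_le_sum fun _ _ => rankAtStalk_le_of_surjective hf _

theorem injective_of_surjective_of_totalRank_le [Module.Finite R M] [Module.Projective R M]
    [Module.Finite R N] [Module.Projective R N] {f : M →ₗ[R] N} (hf : Function.Surjective f)
    (hrank : totalRank R M ≤ totalRank R N) : Function.Injective f := by
  have hc (c) : rankAtStalk M (Function.surjInv ConnectedComponents.surjective_coe c) =
      rankAtStalk N (Function.surjInv ConnectedComponents.surjective_coe c) :=
    ((Finset.sum_eq_sum_iff_of_le fun c _ => rankAtStalk_le_of_surjective hf _).mp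
      (hrank.antisymm (totalRank_le_of_surjective hf) :).symm c (Finset.mem_univ c)).symm
  refine (bijective_of_surjective_of_rankAtStalk_eq hf fun m _ => ?_).1
  rw [← rankAtStalk_surjInv_connectedComponent, hc, rankAtStalk_surjInv_connectedComponent]

end TotalRank

theorem exists_forall_injective_of_bddAbove {R : Type*} [CommRing R]
    [Fintype (ConnectedComponents (PrimeSpectrum R))] {I : Type*} [Preorder I] {M : I → Type*}
    [∀ i, AddCommGroup (M i)] [∀ i, Module R (M i)] [∀ i, Module.Finite R (M i)]
    [∀ i, Module.Projective R (M i)] {μ : ∀ ⦃j i : I⦄, j ≤ i → (M i →ₗ[R] M j)}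
    (hsurj : ∀ ⦃j i : I⦄ (h : j ≤ i), Function.Surjective (μ h)) {D : Set I}
    (hne : D.Nonempty) (hbdd : BddAbove D) :
    ∃ s ∈ D, ∀ u ∈ D, ∀ h : s ≤ u, Function.Injective (μ h) := by
  obtain ⟨x, hx⟩ := hbdd
  have hrank : BddAbove ((fun y => totalRank R (M y)) '' D) :=
    ⟨totalRank R (M x), by
      rintro _ ⟨y, hy, rfl⟩
      exact totalRank_le_of_surjective (hsurj (hx hy))⟩
  obtain ⟨s, hs, hmax⟩ := Nat.sSup_mem (hne.image _) hrank
  refine ⟨s, hs, fun u hu h => injective_of_surjective_of_totalRank_le (hsurj h) ?_⟩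
  exact (le_csSup hrank ⟨u, hu, rfl⟩).trans_eq hmax.symm

section PartialSections

variable {I : Type*} [Lattice I] {T : I → Type*} (τ : ∀ ⦃j i : I⦄, j ≤ i → T i → T j)

/-- Graphs of compatible families of points of `T` defined on a lattice ideal of `I`. -/
structure IsPartialSection (G : Set ((i : I) × T i)) : Prop where
  eq_of_mem {i : I} {t u : T i} : ⟨i, t⟩ ∈ G → ⟨i, u⟩ ∈ G → t = u
  map_mem {i j : I} {t : T i} (h : j ≤ i) : ⟨i, t⟩ ∈ G → ⟨j, τ h t⟩ ∈ G
  exists_sup_mem {i j : I} {t : T i} {u : T j} : ⟨i, t⟩ ∈ G → ⟨j, u⟩ ∈ G → ∃ w, ⟨i ⊔ j, w⟩ ∈ G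

def principalSection (x : I) (t : T x) : Set ((i : I) × T i) :=
  {p | ∃ h : p.1 ≤ x, p.2 = τ h t}

def IsTransitive : Prop :=
  ∀ ⦃k j i : I⦄ (hkj : k ≤ j) (hji : j ≤ i) (t : T i), τ hkj (τ hji t) = τ (hkj.trans hji) t

def IsCartesian : Prop :=
  ∀ (i j : I) (t : T i) (u : T j), τ (inf_le_left : i ⊓ j ≤ i) t = τ inf_le_right u →
    ∃! w : T (i ⊔ j), τ (le_sup_left : i ≤ i ⊔ j) w = t ∧ τ le_sup_right w = u

variable {τ}

theorem IsPartialSection.sUnion {c : Set (Set ((i : I) × T i))}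
    (hc : ∀ G ∈ c, IsPartialSection τ G) (hdir : DirectedOn (· ⊆ ·) c) :
    IsPartialSection τ (⋃₀ c) where
  eq_of_mem := by
    rintro i t u ⟨G₁, hG₁, ht⟩ ⟨G₂, hG₂, hu⟩
    obtain ⟨G, hG, h₁, h₂⟩ := hdir G₁ hG₁ G₂ hG₂
    exact (hc G hG).eq_of_mem (h₁ ht) (h₂ hu)
  map_mem := by
    rintro i j t h ⟨G, hG, ht⟩
    exact ⟨G, hG, (hc G hG).map_mem h ht⟩
  exists_sup_mem := by
    rintro i j t u ⟨G₁, hG₁, ht⟩ ⟨G₂, hG₂, hu⟩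
    obtain ⟨G, hG, h₁, h₂⟩ := hdir G₁ hG₁ G₂ hG₂
    obtain ⟨w, hw⟩ := (hc G hG).exists_sup_mem (h₁ ht) (h₂ hu)
    exact ⟨w, G, hG, hw⟩

theorem isPartialSection_principalSection (hτ : IsTransitive τ) (x : I) (t : T x) :
    IsPartialSection τ (principalSection τ x t) where
  eq_of_mem := by
    rintro i _ _ ⟨_, ht⟩ ⟨_, hu⟩
    exact ht.trans hu.symm
  map_mem := by
    rintro i j _ h ⟨hi, ht⟩
    exact ⟨h.trans hi, (congrArg (τ h) ht).trans (hτ h hi t)⟩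
  exists_sup_mem := by
    rintro i j _ _ ⟨hi, -⟩ ⟨hj, -⟩
    exact ⟨τ (sup_le hi hj) t, sup_le hi hj, rfl⟩

theorem principalSection_subset (hτ : IsTransitive τ) {x y : I} (h : x ≤ y) {t : T x} {u : T y}
    (hu : τ h u = t) :
    principalSection τ x t ⊆ principalSection τ y u := by
  rintro ⟨i, _⟩ ⟨hi, ht⟩
  exact ⟨hi.trans h, ht.trans (by rw [← hu, hτ])⟩

theorem IsPartialSection.exists_restrict_eq (hτ : IsTransitive τ)
    (hsurj : ∀ ⦃j i : I⦄ (h : j ≤ i), Function.Surjective (τ h))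
    {G : Set ((i : I) × T i)} (hG : IsPartialSection τ G) {x s : I} (hs : s ≤ x) {u₀ : T s}
    (hu₀ : ⟨s, u₀⟩ ∈ G)
    (hinj : ∀ ⦃u : I⦄ (h : s ≤ u), u ≤ x → (∃ v, ⟨u, v⟩ ∈ G) → Function.Injective (τ h)) :
    ∃ t : T x, ∀ ⦃y : I⦄ (h : y ≤ x) {u : T y}, ⟨y, u⟩ ∈ G → τ h t = u := by
  obtain ⟨t, ht⟩ := hsurj hs u₀
  refine ⟨t, fun y hy u hu => ?_⟩
  obtain ⟨v, hv⟩ := hG.exists_sup_mem hu hu₀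
  have hw : y ⊔ s ≤ x := sup_le hy hs
  have hv' : τ hw t = v := by
    refine hinj le_sup_right hw ⟨v, hv⟩ ?_
    rw [hτ, ht]
    exact hG.eq_of_mem hu₀ (hG.map_mem le_sup_right hv)
  rw [← hG.eq_of_mem (hG.map_mem le_sup_left hv) hu, ← hv', hτ]

theorem IsPartialSection.exists_extension [∀ i, Nonempty (T i)] (hτ : IsTransitive τ)
    (hsurj : ∀ ⦃j i : I⦄ (h : j ≤ i), Function.Surjective (τ h))
    (hinj : ∀ D : Set I, D.Nonempty → BddAbove D →
      ∃ s ∈ D, ∀ u ∈ D, ∀ h : s ≤ u, Function.Injective (τ h))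
    (hcart : IsCartesian τ) {G : Set ((i : I) × T i)} (hG : IsPartialSection τ G)
    (hne : G.Nonempty) (x : I) :
    ∃ G', IsPartialSection τ G' ∧ G ⊆ G' ∧ ∃ t, ⟨x, t⟩ ∈ G' := by
  set S : Set I := {i | ∃ t, ⟨i, t⟩ ∈ G}
  choose! a ha using fun i (hi : i ∈ S) => hi
  obtain ⟨t, ht⟩ : ∃ t : T x, ∀ ⦃y : I⦄ (h : y ≤ x) {u : T y}, ⟨y, u⟩ ∈ G → τ h t = u := by
    obtain ⟨⟨i, u⟩, hu⟩ := hne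
    obtain ⟨s, ⟨hsx, u₀, hu₀⟩, hs⟩ := hinj {y | y ≤ x ∧ ∃ u, ⟨y, u⟩ ∈ G}
      ⟨x ⊓ i, inf_le_left, _, hG.map_mem inf_le_right hu⟩ ⟨x, fun _ hy => hy.1⟩
    exact hG.exists_restrict_eq hτ hsurj hsx hu₀ fun u h hux hu => hs u ⟨hux, hu⟩ h
  have hcond (s : I) (hs : s ∈ S) : τ (inf_le_left : x ⊓ s ≤ x) t = τ inf_le_right (a s) :=
    ht _ (hG.map_mem _ (ha s hs))
  choose! B hB using fun s hs => (hcart x s t (a s) (hcond s hs)).exists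
  have hBmono (s : I) (hs : s ∈ S) (s' : I) (hs' : s' ∈ S) (h : s ≤ s') :
      τ (sup_le_sup_left h x) (B s') = B s := by
    refine (hcart x s t (a s) (hcond s hs)).unique ⟨?_, ?_⟩ (hB s hs)
    · rw [hτ]
      exact (hB s' hs').1
    · rw [hτ, ← hτ h le_sup_right, (hB s' hs').2]
      exact hG.eq_of_mem (hG.map_mem h (ha s' hs')) (ha s hs)
  refine ⟨⋃₀ ((fun s => principalSection τ (x ⊔ s) (B s)) '' S), .sUnion ?_ ?_, ?_, ?_⟩
  · rintro _ ⟨s, -, rfl⟩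
    exact isPartialSection_principalSection hτ _ _
  · rw [directedOn_image]
    intro s hs s' hs'
    have hss' : s ⊔ s' ∈ S := hG.exists_sup_mem (ha s hs) (ha s' hs')
    exact ⟨s ⊔ s', hss', principalSection_subset hτ _ (hBmono s hs _ hss' le_sup_left),
      principalSection_subset hτ _ (hBmono s' hs' _ hss' le_sup_right)⟩
  · rintro ⟨y, u⟩ hu
    refine ⟨_, ⟨y, ⟨u, hu⟩, rfl⟩, le_sup_right, ?_⟩
    rw [(hB y ⟨u, hu⟩).2]
    exact hG.eq_of_mem hu (ha y ⟨u, hu⟩)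
  · obtain ⟨⟨s, u⟩, hu⟩ := hne
    exact ⟨τ le_sup_left (B s), _, ⟨s, ⟨u, hu⟩, rfl⟩, le_sup_left, rfl⟩

theorem exists_compatible_family_of_isCartesian [∀ i, Nonempty (T i)] (hτ : IsTransitive τ)
    (hsurj : ∀ ⦃j i : I⦄ (h : j ≤ i), Function.Surjective (τ h))
    (hinj : ∀ D : Set I, D.Nonempty → BddAbove D →
      ∃ s ∈ D, ∀ u ∈ D, ∀ h : s ≤ u, Function.Injective (τ h))
    (hcart : IsCartesian τ) :
    ∃ b : ∀ i, T i, ∀ ⦃j i : I⦄ (h : j ≤ i), τ h (b i) = b j := by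
  obtain ⟨G, hG, hmax⟩ := zorn_subset {G | IsPartialSection τ G} fun c hc hchain =>
    ⟨⋃₀ c, .sUnion hc hchain.directedOn, fun _ => Set.subset_sUnion_of_mem⟩
  have hdom (x : I) : ∃ t, ⟨x, t⟩ ∈ G := by
    obtain ⟨G', hG', hGG', t, ht⟩ : ∃ G', IsPartialSection τ G' ∧ G ⊆ G' ∧ ∃ t, ⟨x, t⟩ ∈ G' := by
      rcases G.eq_empty_or_nonempty with rfl | hne
      · obtain ⟨t⟩ : Nonempty (T x) := inferInstance
        exact ⟨principalSection τ x t, isPartialSection_principalSection hτ x t,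
          Set.empty_subset _, τ le_rfl t, le_rfl, rfl⟩
      · exact hG.exists_extension hτ hsurj hinj hcart hne x
    exact ⟨t, hmax hG' hGG' ht⟩
  choose b hb using hdom
  exact ⟨b, fun j i h => hG.eq_of_mem (hG.map_mem h (hb i)) (hb j)⟩

end PartialSections

section Twist

variable {R : Type*} [Semiring R] {I : Type*} [Lattice I] {M : I → Type*}
  [∀ i, AddCommGroup (M i)] [∀ i, Module R (M i)] {μ : ∀ ⦃j i : I⦄, j ≤ i → (M i →ₗ[R] M j)}

variable (μ) in
/-- The transition maps twisted by `z`; when `z` is a cocycle this is an inverse system of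
torsors, whose compatible families are the `b` with `z h = μ h (b i) - b j`. -/
def twist (z : ∀ ⦃j i : I⦄, j ≤ i → M j) : ∀ ⦃j i : I⦄, j ≤ i → M i → M j :=
  fun _ _ h m => μ h m - z h

variable {z : ∀ ⦃j i : I⦄, j ≤ i → M j}

theorem isTransitive_twist
    (htrans : ∀ ⦃k j i : I⦄ (hkj : k ≤ j) (hji : j ≤ i) (m : M i),
      μ hkj (μ hji m) = μ (hkj.trans hji) m)
    (hz : ∀ ⦃k j i : I⦄ (hkj : k ≤ j) (hji : j ≤ i), z (hkj.trans hji) = μ hkj (z hji) + z hkj) :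
    IsTransitive (twist μ z) := by
  intro k j i hkj hji m
  rw [twist, twist, twist, map_sub, htrans hkj hji, hz hkj hji]
  abel

theorem twist_surjective {j i : I} {h : j ≤ i} (hμ : Function.Surjective (μ h)) :
    Function.Surjective (twist μ z h) :=
  (Equiv.subRight (z h)).surjective.comp hμ

theorem twist_injective {j i : I} {h : j ≤ i} (hμ : Function.Injective (μ h)) :
    Function.Injective (twist μ z h) :=
  (Equiv.subRight (z h)).injective.comp hμ

theorem isCartesian_twist
    (hz : ∀ ⦃k j i : I⦄ (hkj : k ≤ j) (hji : j ≤ i), z (hkj.trans hji) = μ hkj (z hji) + z hkj)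
    (hcart : IsCartesian fun _ _ h => μ h) : IsCartesian (twist μ z) := by
  intro i j t u htu
  have hcond : μ (inf_le_left : i ⊓ j ≤ i) (t + z (le_sup_left : i ≤ i ⊔ j)) =
      μ (inf_le_right : i ⊓ j ≤ j) (u + z (le_sup_right : j ≤ i ⊔ j)) := by
    have hi := hz (inf_le_left : i ⊓ j ≤ i) (le_sup_left : i ≤ i ⊔ j)
    have hj := hz (inf_le_right : i ⊓ j ≤ j) (le_sup_right : j ≤ i ⊔ j)
    rw [twist, twist] at htu
    rw [map_add, map_add, ← sub_eq_of_eq_add hi, ← sub_eq_of_eq_add hj, ← add_sub_assoc,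
      ← add_sub_assoc, add_sub_right_comm, htu, add_sub_right_comm]
  refine (existsUnique_congr fun w => ?_).mpr (hcart i j _ _ hcond)
  simp only [twist, sub_eq_iff_eq_add]

end Twist

theorem statement8_general {R : Type*} [CommRing R]
    (hcomp : Finite (ConnectedComponents (PrimeSpectrum R)))
    {I : Type*} [Lattice I]
    (M : I → Type*) [∀ i, AddCommGroup (M i)] [∀ i, Module R (M i)]
    [∀ i, Module.Finite R (M i)] [∀ i, Module.Projective R (M i)]
    (μ : ∀ ⦃j i : I⦄, j ≤ i → (M i →ₗ[R] M j))
    (htrans : ∀ ⦃k j i : I⦄ (hkj : k ≤ j) (hji : j ≤ i) (x : M i),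
      μ hkj (μ hji x) = μ (hkj.trans hji) x)
    (hsurj : ∀ ⦃j i : I⦄ (h : j ≤ i), Function.Surjective (μ h))
    (hcart : ∀ (i j : I) (x : M i) (y : M j),
      μ (inf_le_left : i ⊓ j ≤ i) x = μ (inf_le_right : i ⊓ j ≤ j) y →
      ∃! w : M (i ⊔ j),
        μ (le_sup_left : i ≤ i ⊔ j) w = x ∧ μ (le_sup_right : j ≤ i ⊔ j) w = y) :
    ∀ z : ∀ ⦃j i : I⦄, j ≤ i → M j,
      (∀ ⦃k j i : I⦄ (hkj : k ≤ j) (hji : j ≤ i),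
        z (hkj.trans hji) = μ hkj (z hji) + z hkj) →
      ∃ b : ∀ i, M i, ∀ ⦃j i : I⦄ (h : j ≤ i), z h = μ h (b i) - b j := by
  intro z hz
  have := Fintype.ofFinite (ConnectedComponents (PrimeSpectrum R))
  have hinj (D : Set I) (hD : D.Nonempty) (hbdd : BddAbove D) :
      ∃ s ∈ D, ∀ u ∈ D, ∀ h : s ≤ u, Function.Injective (twist μ z h) :=
    (exists_forall_injective_of_bddAbove hsurj hD hbdd).imp fun _ ⟨hs, h⟩ =>
      ⟨hs, fun u hu hsu => twist_injective (h u hu hsu)⟩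
  obtain ⟨b, hb⟩ := exists_compatible_family_of_isCartesian (isTransitive_twist htrans hz)
    (fun _ _ h => twist_surjective (hsurj h)) hinj (isCartesian_twist hz hcart)
  exact ⟨b, fun j i h => (sub_eq_iff_comm.mp (hb h)).symm⟩

/-- **Vanishing of `lim¹` for inverse systems of finitely generated projective
modules over a lattice.**
Let `R` be a commutative ring whose spectrum has finitely many connected components,
and `(M i)` an inverse system of finitely generated projective `R`-modules indexed by
a lattice `I` with surjective transition maps such that all the squares
`(M (i ⊔ j), M i, M j, M (i ⊓ j))` are Cartesian.  Then `lim¹ M i = 0`: every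
cocycle is a coboundary, equivalently every torsor under the inverse system admits
a compatible family of points. -/
theorem statement8 {R : Type*} [CommRing R]
    (hcomp : Finite (ConnectedComponents (PrimeSpectrum R)))
    {I : Type*} [Lattice I]
    (M : I → Type*) [∀ i, AddCommGroup (M i)] [∀ i, Module R (M i)]
    [∀ i, Module.Finite R (M i)] [∀ i, Module.Projective R (M i)]
    (μ : ∀ ⦃j i : I⦄, j ≤ i → (M i →ₗ[R] M j))
    (hrefl : ∀ (i : I) (h : i ≤ i), μ h = LinearMap.id)
    (htrans : ∀ ⦃k j i : I⦄ (hkj : k ≤ j) (hji : j ≤ i) (x : M i),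
      μ hkj (μ hji x) = μ (hkj.trans hji) x)
    (hsurj : ∀ ⦃j i : I⦄ (h : j ≤ i), Function.Surjective (μ h))
    (hcart : ∀ (i j : I) (x : M i) (y : M j),
      μ (inf_le_left : i ⊓ j ≤ i) x = μ (inf_le_right : i ⊓ j ≤ j) y →
      ∃! w : M (i ⊔ j),
        μ (le_sup_left : i ≤ i ⊔ j) w = x ∧ μ (le_sup_right : j ≤ i ⊔ j) w = y) :
    ∀ z : ∀ ⦃j i : I⦄, j ≤ i → M j,
      (∀ ⦃k j i : I⦄ (hkj : k ≤ j) (hji : j ≤ i),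
        z (hkj.trans hji) = μ hkj (z hji) + z hkj) →
      ∃ b : ∀ i, M i, ∀ ⦃j i : I⦄ (h : j ≤ i), z h = μ h (b i) - b j :=
  statement8_general hcomp M μ htrans hsurj hcart
end

section
/- Let R be a commutative ring, and for indices j ≤ i in a poset let μ_j^i : M_i → M_j be surjective R-linear maps between finitely generated projective R-modules such that for all i, j the square with vertices M_{i∨j}, M_i, M_j, M_{i∧j} is Cartesian. Then for all j, j' ≤ i: (a) ker(μ_j^i) ∩ ker(μ_{j'}^i) = ker(μ_{j∨j'}^i), and (b) μ_{j'}^i(ker(μ_j^i)) = ker(μ_{j∧j'}^{j'}). -/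
/-! Part (a): an element of `M i` lies in both kernels iff its image `w` in `M (j ⊔ j')` maps
to `(0, 0)` in `M j × M j'`, and by uniqueness of gluing this forces `w = 0`.
Part (b): if `y ∈ M j'` dies in `M (j ⊓ j')`, then `(0, y)` glues to some `w ∈ M (j ⊔ j')`,
and any lift of `w` to `M i` lies in `ker μ_j^i` and maps to `y`. -/

namespace InverseSystem

variable {R I : Type*} [CommRing R] [Lattice I] {M : I → Type*}
  [∀ i, AddCommGroup (M i)] [∀ i, Module R (M i)]
  (μ : ∀ ⦃j i : I⦄, j ≤ i → (M i →ₗ[R] M j))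

theorem ker_le_ker_of_le
    (htrans : ∀ ⦃k j i : I⦄ (hkj : k ≤ j) (hji : j ≤ i) (x : M i),
      μ hkj (μ hji x) = μ (hkj.trans hji) x)
    {k k' i : I} (hk'k : k' ≤ k) (hk : k ≤ i) :
    LinearMap.ker (μ hk) ≤ LinearMap.ker (μ (hk'k.trans hk)) := by
  intro x hx
  rw [LinearMap.mem_ker] at hx ⊢
  rw [← htrans hk'k hk, hx, map_zero]

theorem ker_inf_ker_eq_ker_sup
    (htrans : ∀ ⦃k j i : I⦄ (hkj : k ≤ j) (hji : j ≤ i) (x : M i),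
      μ hkj (μ hji x) = μ (hkj.trans hji) x)
    {i j j' : I}
    (hinj : ∀ w : M (j ⊔ j'), μ le_sup_left w = 0 → μ le_sup_right w = 0 → w = 0)
    (hj : j ≤ i) (hj' : j' ≤ i) :
    LinearMap.ker (μ hj) ⊓ LinearMap.ker (μ hj') = LinearMap.ker (μ (sup_le hj hj')) := by
  refine le_antisymm ?_ (le_inf (ker_le_ker_of_le μ htrans le_sup_left _)
    (ker_le_ker_of_le μ htrans le_sup_right _))
  rintro x ⟨hxj, hxj'⟩
  simp only [SetLike.mem_coe, LinearMap.mem_ker] at hxj hxj' ⊢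
  exact hinj _ (by rwa [htrans]) (by rwa [htrans])

theorem map_ker_eq_ker_inf
    (htrans : ∀ ⦃k j i : I⦄ (hkj : k ≤ j) (hji : j ≤ i) (x : M i),
      μ hkj (μ hji x) = μ (hkj.trans hji) x)
    {i j j' : I}
    (hglue : ∀ y : M j', μ (inf_le_right : j ⊓ j' ≤ j') y = 0 →
      ∃ w : M (j ⊔ j'), μ le_sup_left w = 0 ∧ μ le_sup_right w = y)
    (hj : j ≤ i) (hj' : j' ≤ i) (hsurj : Function.Surjective (μ (sup_le hj hj'))) :
    Submodule.map (μ hj') (LinearMap.ker (μ hj)) =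
      LinearMap.ker (μ (inf_le_right : j ⊓ j' ≤ j')) := by
  apply le_antisymm
  · rintro _ ⟨x, hx, rfl⟩
    simp only [SetLike.mem_coe, LinearMap.mem_ker] at hx ⊢
    rw [htrans, ← htrans inf_le_left hj, hx, map_zero]
  · intro y hy
    obtain ⟨w, hw, hwy⟩ := hglue y hy
    obtain ⟨x, rfl⟩ := hsurj w
    refine ⟨x, ?_, ?_⟩
    · rw [SetLike.mem_coe, LinearMap.mem_ker, ← hw, htrans]
    · rw [← hwy, htrans]

end InverseSystem

theorem statement9_general {R : Type*} [CommRing R]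
    {I : Type*} [Lattice I]
    (M : I → Type*) [∀ i, AddCommGroup (M i)] [∀ i, Module R (M i)]
    (μ : ∀ ⦃j i : I⦄, j ≤ i → (M i →ₗ[R] M j))
    (htrans : ∀ ⦃k j i : I⦄ (hkj : k ≤ j) (hji : j ≤ i) (x : M i),
      μ hkj (μ hji x) = μ (hkj.trans hji) x)
    (hsurj : ∀ ⦃j i : I⦄ (h : j ≤ i), Function.Surjective (μ h))
    (hcart : ∀ (i j : I) (x : M i) (y : M j),
      μ (inf_le_left : i ⊓ j ≤ i) x = μ (inf_le_right : i ⊓ j ≤ j) y →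
      ∃! w : M (i ⊔ j),
        μ (le_sup_left : i ≤ i ⊔ j) w = x ∧ μ (le_sup_right : j ≤ i ⊔ j) w = y)
    (i j j' : I) (hj : j ≤ i) (hj' : j' ≤ i) :
    LinearMap.ker (μ hj) ⊓ LinearMap.ker (μ hj') =
      LinearMap.ker (μ (sup_le hj hj' : j ⊔ j' ≤ i)) ∧
    Submodule.map (μ hj') (LinearMap.ker (μ hj)) =
      LinearMap.ker (μ (inf_le_right : j ⊓ j' ≤ j')) := by
  have hinj (w : M (j ⊔ j')) (h : μ le_sup_left w = 0) (h' : μ le_sup_right w = 0) : w = 0 := by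
    obtain ⟨_, -, huniq⟩ := hcart j j' 0 0 (by simp only [map_zero])
    exact (huniq w ⟨h, h'⟩).trans (huniq 0 ⟨map_zero _, map_zero _⟩).symm
  have hglue (y : M j') (hy : μ (inf_le_right : j ⊓ j' ≤ j') y = 0) :
      ∃ w : M (j ⊔ j'), μ le_sup_left w = 0 ∧ μ le_sup_right w = y :=
    (hcart j j' 0 y (by rw [map_zero, hy])).exists
  exact ⟨InverseSystem.ker_inf_ker_eq_ker_sup μ htrans hinj hj hj',
    InverseSystem.map_ker_eq_ker_inf μ htrans hglue hj hj' (hsurj _)⟩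

/-- **Kernels of transition maps in a Cartesian inverse system.**
Let `(M i)` be an inverse system of finitely generated projective `R`-modules over a
lattice `I` with surjective transition maps `μ_j^i` such that all squares
`(M (i ⊔ j), M i, M j, M (i ⊓ j))` are Cartesian.  Then for `j, j' ≤ i`:
(a) `ker(μ_j^i) ∩ ker(μ_{j'}^i) = ker(μ_{j ⊔ j'}^i)`, and
(b) `μ_{j'}^i(ker(μ_j^i)) = ker(μ_{j ⊓ j'}^{j'})`. -/
theorem statement9 {R : Type*} [CommRing R]
    {I : Type*} [Lattice I]
    (M : I → Type*) [∀ i, AddCommGroup (M i)] [∀ i, Module R (M i)]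
    [∀ i, Module.Finite R (M i)] [∀ i, Module.Projective R (M i)]
    (μ : ∀ ⦃j i : I⦄, j ≤ i → (M i →ₗ[R] M j))
    (hrefl : ∀ (i : I) (h : i ≤ i), μ h = LinearMap.id)
    (htrans : ∀ ⦃k j i : I⦄ (hkj : k ≤ j) (hji : j ≤ i) (x : M i),
      μ hkj (μ hji x) = μ (hkj.trans hji) x)
    (hsurj : ∀ ⦃j i : I⦄ (h : j ≤ i), Function.Surjective (μ h))
    (hcart : ∀ (i j : I) (x : M i) (y : M j),
      μ (inf_le_left : i ⊓ j ≤ i) x = μ (inf_le_right : i ⊓ j ≤ j) y →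
      ∃! w : M (i ⊔ j),
        μ (le_sup_left : i ≤ i ⊔ j) w = x ∧ μ (le_sup_right : j ≤ i ⊔ j) w = y)
    (i j j' : I) (hj : j ≤ i) (hj' : j' ≤ i) :
    LinearMap.ker (μ hj) ⊓ LinearMap.ker (μ hj') =
      LinearMap.ker (μ (sup_le hj hj' : j ⊔ j' ≤ i)) ∧
    Submodule.map (μ hj') (LinearMap.ker (μ hj)) =
      LinearMap.ker (μ (inf_le_right : j ⊓ j' ≤ j')) :=
  statement9_general M μ htrans hsurj hcart i j j' hj hj'
end

section
/- Let R be a commutative ring such that Spec R is connected (R has no nontrivial idempotents), and let M be a finitely generated projective R-module. If N ⊆ N' are direct summands of M of equal (constant) rank, then N = N'. -/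
/-!
Project `M` onto `N` along a complement. Restricted to `N'` this is a surjection `N' → N`
between finite flat modules whose ranks agree at every stalk, so it is bijective (over a local
ring a surjection between free modules of the same finite rank is injective). But it fixes `N`
pointwise, so injectivity forces every element of `N'` to equal its projection, which lies in `N`.
-/

namespace Submodule

variable {R M : Type*} [CommRing R] [AddCommGroup M] [Module R M] {N C : Submodule R M}

theorem finite_of_isCompl [Module.Finite R M] (h : IsCompl N C) : Module.Finite R N :=
  Module.Finite.of_surjective _ (projectionOnto_surjective h)

theorem flat_of_isCompl [Module.Flat R M] (h : IsCompl N C) : Module.Flat R N :=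
  Module.Flat.of_retract N.subtype (N.projectionOnto C h) (by ext; simp)

theorem eq_of_le_of_rankAtStalk_eq {N' : Submodule R M}
    [Module.Finite R N] [Module.Flat R N] [Module.Finite R N'] [Module.Flat R N']
    (hNC : IsCompl N C) (hle : N ≤ N')
    (hrank : ∀ (m : Ideal R) [m.IsMaximal],
      Module.rankAtStalk N' ⟨m, inferInstance⟩ = Module.rankAtStalk N ⟨m, inferInstance⟩) :
    N = N' := by
  set π : N' →ₗ[R] N := N.projectionOnto C hNC ∘ₗ N'.subtype
  have hπ_fix (x : N) : π ⟨x, hle x.2⟩ = x := projectionOnto_apply_left hNC x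
  have hπ_inj : Function.Injective π :=
    (Module.bijective_of_surjective_of_rankAtStalk_eq
      (fun x ↦ ⟨⟨x, hle x.2⟩, hπ_fix x⟩) hrank).injective
  refine le_antisymm hle fun x hx ↦ ?_
  have hx_eq : (π ⟨x, hx⟩ : M) = x := congrArg Subtype.val (hπ_inj (hπ_fix (π ⟨x, hx⟩)))
  exact hx_eq ▸ (π ⟨x, hx⟩).2

end Submodule

theorem statement10_general {R M : Type*} [CommRing R] [AddCommGroup M] [Module R M]
    [Module.Finite R M] [Module.Projective R M]
    (N N' : Submodule R M)
    (hN : ∃ C : Submodule R M, IsCompl N C)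
    (hN' : ∃ C : Submodule R M, IsCompl N' C)
    (hle : N ≤ N')
    (hrank : ∀ p : PrimeSpectrum R,
      Module.rankAtStalk (R := R) N p = Module.rankAtStalk (R := R) N' p) :
    N = N' := by
  obtain ⟨C, hC⟩ := hN
  obtain ⟨C', hC'⟩ := hN'
  have := Submodule.finite_of_isCompl hC
  have := Submodule.flat_of_isCompl hC
  have := Submodule.finite_of_isCompl hC'
  have := Submodule.flat_of_isCompl hC'
  exact Submodule.eq_of_le_of_rankAtStalk_eq hC hle fun m _ ↦ (hrank _).symm

/-- **Nested direct summands of equal rank coincide.**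
Let `R` be a commutative ring with connected spectrum and `M` a finitely generated
projective `R`-module.  If `N ⊆ N'` are direct summands of `M` of equal (constant)
rank, then `N = N'`. -/
theorem statement10 {R M : Type*} [CommRing R] [AddCommGroup M] [Module R M]
    [Module.Finite R M] [Module.Projective R M]
    [ConnectedSpace (PrimeSpectrum R)]
    (N N' : Submodule R M)
    (hN : ∃ C : Submodule R M, IsCompl N C)
    (hN' : ∃ C : Submodule R M, IsCompl N' C)
    (hle : N ≤ N')
    (hrank : ∀ p : PrimeSpectrum R,
      Module.rankAtStalk (R := R) N p = Module.rankAtStalk (R := R) N' p) :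
    N = N' :=
  statement10_general N N' hN hN' hle hrank
end

section
/- Let 0 → L → M → N → 0 be a sequence of filtered modules over a commutative ring R, where each of L, M, N carries a decreasing filtration by submodules and the maps respect filtrations. The following are equivalent: (i) the maps are strict (f(Fⁿ L) = Fⁿ M ∩ im(f), etc.) and the underlying sequence of modules is short exact; (ii) for all n ∈ ℤ the sequence 0 → Fⁿ L → Fⁿ M → Fⁿ N → 0 is exact; (iii) assuming additionally the filtrations are exhaustive and separated with only finitely many jumps, the sequence of associated graded modules 0 → gr L → gr M → gr N → 0 is exact, where gr M = ⊕ₙ Fⁿ M/F^{n+1} M, together with exactness of the underlying sequence. Prove the equivalence of (i) and (ii). -/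
/-!
Images commute with suprema of submodules, and, the lattice of submodules being upper
continuous, so does intersection with the supremum of a directed family. Hence for
exhaustive filtrations the exactness of each `0 → Fⁿ L → Fⁿ M → Fⁿ N → 0` glues to the
exactness of `0 → L → M → N → 0`, and the strictness conditions are then a rewrite.
-/

open Submodule

namespace LinearMap

variable {R M N ι : Type*}

theorem injective_of_directed_of_iSup_eq_top [Ring R] [AddCommGroup M] [Module R M]
    [AddCommGroup N] [Module R N] (f : M →ₗ[R] N) {F : ι → Submodule R M}
    (hdir : Directed (· ≤ ·) F) (hF : ⨆ i, F i = ⊤) (h : ∀ i, ∀ x ∈ F i, f x = 0 → x = 0) :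
    Function.Injective f := by
  refine ker_eq_bot.1 <| disjoint_top.1 <| hF ▸ hdir.disjoint_iSup_right.2 fun i => ?_
  exact disjoint_def.2 fun x hker hx => h i x hx hker

variable [Semiring R] [AddCommMonoid M] [Module R M] [AddCommMonoid N] [Module R N]

theorem range_eq_top_of_map_eq (f : M →ₗ[R] N) {F : ι → Submodule R M}
    {G : ι → Submodule R N} (hG : ⨆ i, G i = ⊤) (h : ∀ i, map f (F i) = G i) :
    range f = ⊤ :=
  eq_top_iff.2 <| hG ▸ iSup_le fun i => h i ▸ map_le_range

theorem range_eq_of_map_eq_inf (f : M →ₗ[R] N) {F : ι → Submodule R M}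
    {G : ι → Submodule R N} {K : Submodule R N} (hF : ⨆ i, F i = ⊤)
    (hdir : Directed (· ≤ ·) G) (hG : ⨆ i, G i = ⊤) (h : ∀ i, map f (F i) = G i ⊓ K) :
    range f = K := by
  rw [← Submodule.map_top, ← hF, Submodule.map_iSup]
  simp_rw [h]
  rw [← hdir.iSup_inf_eq, hG, top_inf_eq]

end LinearMap

open LinearMap in
theorem statement16_general {R L M N : Type*} [CommRing R]
    [AddCommGroup L] [Module R L] [AddCommGroup M] [Module R M]
    [AddCommGroup N] [Module R N]
    (FL : ℤ → Submodule R L) (FM : ℤ → Submodule R M) (FN : ℤ → Submodule R N)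
    (hFL : Antitone FL) (hFM : Antitone FM)
    (hFLexh : ⨆ n, FL n = ⊤)
    (hFMexh : ⨆ n, FM n = ⊤)
    (hFNexh : ⨆ n, FN n = ⊤)
    (f : L →ₗ[R] M) (g : M →ₗ[R] N) :
    -- (i) strict morphisms and short exact underlying sequence
    (Function.Injective f ∧ Function.Surjective g ∧
        LinearMap.range f = LinearMap.ker g ∧
        (∀ n : ℤ, Submodule.map f (FL n) = FM n ⊓ LinearMap.range f) ∧
        (∀ n : ℤ, Submodule.map g (FM n) = FN n ⊓ LinearMap.range g)) ↔
    -- (ii) each filtration step gives a short exact sequence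
    (∀ n : ℤ,
        (∀ x ∈ FL n, f x = 0 → x = 0) ∧
        Submodule.map f (FL n) = FM n ⊓ LinearMap.ker g ∧
        Submodule.map g (FM n) = FN n) := by
  constructor
  · rintro ⟨hinj, hsurj, hexact, hstrict_f, hstrict_g⟩ n
    refine ⟨fun x _ hx => hinj (by rwa [map_zero]), by rw [hstrict_f n, hexact], ?_⟩
    rw [hstrict_g n, range_eq_top.2 hsurj, inf_top_eq]
  · intro h
    choose hinj hstrict_f hstrict_g using h
    have hsurj : range g = ⊤ := range_eq_top_of_map_eq g hFNexh hstrict_g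
    have hexact : range f = ker g :=
      range_eq_of_map_eq_inf f hFLexh hFM.directed_le hFMexh hstrict_f
    refine ⟨injective_of_directed_of_iSup_eq_top f hFL.directed_le hFLexh hinj,
      range_eq_top.1 hsurj, hexact, fun n => hexact ▸ hstrict_f n, fun n => ?_⟩
    rw [hstrict_g n, hsurj, inf_top_eq]

/-- **Characterization of short exact sequences of filtered modules.**
Let `L → M → N` be filtration-respecting maps of filtered modules (decreasing
exhaustive separated filtrations).  The following are equivalent:
(i) the maps are strict and the underlying sequence `0 → L → M → N → 0` is short
exact; (ii) for every `n` the sequence `0 → Fⁿ L → Fⁿ M → Fⁿ N → 0` is exact. -/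
theorem statement16 {R L M N : Type*} [CommRing R]
    [AddCommGroup L] [Module R L] [AddCommGroup M] [Module R M]
    [AddCommGroup N] [Module R N]
    (FL : ℤ → Submodule R L) (FM : ℤ → Submodule R M) (FN : ℤ → Submodule R N)
    (hFL : Antitone FL) (hFM : Antitone FM) (hFN : Antitone FN)
    (hFLexh : ⨆ n, FL n = ⊤) (hFLsep : ⨅ n, FL n = ⊥)
    (hFMexh : ⨆ n, FM n = ⊤) (hFMsep : ⨅ n, FM n = ⊥)
    (hFNexh : ⨆ n, FN n = ⊤) (hFNsep : ⨅ n, FN n = ⊥)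
    (f : L →ₗ[R] M) (g : M →ₗ[R] N)
    (hf : ∀ n : ℤ, Submodule.map f (FL n) ≤ FM n)
    (hg : ∀ n : ℤ, Submodule.map g (FM n) ≤ FN n) :
    -- (i) strict morphisms and short exact underlying sequence
    (Function.Injective f ∧ Function.Surjective g ∧
        LinearMap.range f = LinearMap.ker g ∧
        (∀ n : ℤ, Submodule.map f (FL n) = FM n ⊓ LinearMap.range f) ∧
        (∀ n : ℤ, Submodule.map g (FM n) = FN n ⊓ LinearMap.range g)) ↔
    -- (ii) each filtration step gives a short exact sequence
    (∀ n : ℤ,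
        (∀ x ∈ FL n, f x = 0 → x = 0) ∧
        Submodule.map f (FL n) = FM n ⊓ LinearMap.ker g ∧
        Submodule.map g (FM n) = FN n) :=
  statement16_general FL FM FN hFL hFM hFLexh hFMexh hFNexh f g
end

section
/- Let R be a commutative ring and M a finitely generated projective R-module with a decreasing exhaustive separated filtration (Fⁿ M) such that each Fⁿ M is a direct summand of M and each quotient M/Fⁿ M is finitely generated projective. Define a filtration on the dual module M* = Hom_R(M, R) by Fⁿ M* = (F^{1-n} M)^⊥ = {f ∈ M* : f(F^{1-n} M) = 0}. Then the evaluation map ev : M ⊗ M* → R and the coevaluation map δ : R → M* ⊗ M make M* into a dual of M in the symmetric monoidal category of filtered R-modules, where the tensor filtration is Fⁿ(M ⊗ N) = Σ_{i+j=n} im(Fⁱ M ⊗ Fʲ N). Concretely: ev maps Fⁿ(M ⊗ M*) into Fⁿ R (where F⁰ R = R, F¹ R = 0), and δ(1) ∈ F⁰(M* ⊗ M). -/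
/-!
Evaluation kills `Fⁱ M ⊗ (F^{1-n+i} M)^⊥` for `n ≥ 1` simply because `Fⁱ M ⊆ F^{1-n+i} M`.
For the coevaluation, pick projections `Pₙ` of `M` onto the summands `Fⁿ M` and a coevaluation
`c₀ ∈ M* ⊗ M` of the finitely generated projective module `M`. Transporting `c₀` along
`(Pₙ - Pₙ₊₁)* ⊗ Pₙ` gives an element of `(F^{n+1} M)^⊥ ⊗ Fⁿ M ⊆ F⁰(M* ⊗ M)` acting as
`Pₙ ∘ (Pₙ - Pₙ₊₁) = Pₙ - Pₙ₊₁`; summing over `a ≤ n < b` telescopes to `P_a - P_b = id`.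
-/

open TensorProduct LinearMap

section Duality

variable {R M N M' N' : Type*} [CommSemiring R] [AddCommMonoid M] [Module R M]
  [AddCommMonoid N] [Module R N] [AddCommMonoid M'] [Module R M'] [AddCommMonoid N'] [Module R N']

theorem range_map_subtype_le_ker_contractRight {p : Submodule R M}
    {q : Submodule R (Module.Dual R M)} (hq : q ≤ p.dualAnnihilator) :
    range (map p.subtype q.subtype) ≤ ker (contractRight R M) := by
  refine range_le_ker_iff.mpr (TensorProduct.ext' fun m f => ?_)
  exact (Submodule.mem_dualAnnihilator _).mp (hq f.2) m m.2

theorem lift_lsmul_comp_applyₗ_eq_dualTensorHom (x : Module.Dual R M ⊗[R] N) (m : M) :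
    lift ((lsmul R N).comp (applyₗ m)) x = dualTensorHom R M N x m := by
  induction x using TensorProduct.induction_on with
  | zero => simp
  | tmul f n => simp
  | add x y hx hy => simp [hx, hy]

theorem dualTensorHom_map_dualMap (s : M' →ₗ[R] M) (t : N →ₗ[R] N')
    (x : Module.Dual R M ⊗[R] N) :
    dualTensorHom R M' N' (map s.dualMap t x) = t ∘ₗ dualTensorHom R M N x ∘ₗ s := by
  induction x using TensorProduct.induction_on with
  | zero => simp
  | tmul f n => ext; simp
  | add x y hx hy => simp [hx, hy, comp_add, add_comp]

theorem map_dualMap_mem_range_map_subtype {p : Submodule R M} {q : Submodule R N}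
    {s : M →ₗ[R] M} {t : N →ₗ[R] N} (hs : p ≤ ker s) (ht : range t ≤ q)
    (x : Module.Dual R M ⊗[R] N) :
    map s.dualMap t x ∈ range (map p.dualAnnihilator.subtype q.subtype) := by
  refine range_map_mono ?_ (by rwa [Submodule.range_subtype]) (mem_range_self _ x)
  rw [Submodule.range_subtype]
  exact s.range_dualMap_le_dualAnnihilator_ker.trans (Submodule.dualAnnihilator_anti hs)

end Duality

theorem Submodule.exists_isProj_of_exists_isCompl {R M : Type*} [Ring R] [AddCommGroup M]
    [Module R M] {p : Submodule R M} (h : ∃ q, IsCompl p q) : ∃ f : M →ₗ[R] M, IsProj p f := by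
  obtain ⟨q, hpq⟩ := h
  exact ⟨p.projection q hpq, projection_apply_mem hpq, fun _ => projection_apply_of_mem_left hpq⟩

theorem sum_isProj_comp_sub_telescope {R M : Type*} [Semiring R] [AddCommGroup M] [Module R M]
    {F : ℤ → Submodule R M} (hF : Antitone F) {P : ℤ → M →ₗ[R] M} (hP : ∀ n, IsProj (F n) (P n))
    (a : ℤ) (N : ℕ) (m : M) :
    ∑ k ∈ Finset.range N, P (a + k) (P (a + k) m - P (a + k + 1) m) = P a m - P (a + N) m := by
  have step (n : ℤ) : P n (P n m - P (n + 1) m) = P n m - P (n + 1) m := by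
    rw [map_sub, (hP n).map_id _ ((hP n).map_mem m),
      (hP n).map_id _ (hF (Int.le_add_one le_rfl) ((hP (n + 1)).map_mem m))]
  simp_rw [step]
  simpa [add_assoc] using Finset.sum_range_sub' (fun k : ℕ => P (a + k) m) N

theorem statement17_general {R M : Type*} [CommRing R] [AddCommGroup M] [Module R M]
    [Module.Finite R M] [Module.Projective R M]
    (F : ℤ → Submodule R M) (hF : Antitone F)
    (a b : ℤ) (ha : ∀ i ≤ a, F i = ⊤) (hb : ∀ i, b ≤ i → F i = ⊥)
    (hsummand : ∀ n : ℤ, ∃ C : Submodule R M, IsCompl (F n) C) :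
    -- dual filtration
    letI FD : ℤ → Submodule R (Module.Dual R M) :=
      fun n => (F (1 - n)).dualAnnihilator
    -- tensor filtration on M ⊗ M*
    letI FT : ℤ → Submodule R (M ⊗[R] Module.Dual R M) :=
      fun n => ⨆ i : ℤ,
        LinearMap.range (TensorProduct.map (F i).subtype (FD (n - i)).subtype)
    -- tensor filtration on M* ⊗ M
    letI FT' : ℤ → Submodule R (Module.Dual R M ⊗[R] M) :=
      fun n => ⨆ i : ℤ,
        LinearMap.range (TensorProduct.map (FD i).subtype (F (n - i)).subtype)
    -- evaluation respects the filtrations: `ev(Fⁿ(M ⊗ M*)) ⊆ Fⁿ R = 0` for `n ≥ 1`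
    (∀ n : ℤ, 1 ≤ n → ∀ x ∈ FT n, contractRight R M x = 0) ∧
    -- coevaluation: `δ(1) ∈ F⁰(M* ⊗ M)` and it witnesses the duality
    (∃ c ∈ FT' 0, ∀ m : M,
      TensorProduct.lift ((LinearMap.lsmul R M).comp (LinearMap.applyₗ m)) c = m) := by
  refine ⟨fun n hn x hx => iSup_le (fun i => range_map_subtype_le_ker_contractRight
    (Submodule.dualAnnihilator_anti (hF (by omega)))) hx, ?_⟩
  choose P hP using fun n => Submodule.exists_isProj_of_exists_isCompl (hsummand n)
  obtain ⟨c₀, hc₀⟩ := (dualTensorHom_bijective (R := R) (M := M) (N := M)).2 LinearMap.id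
  refine ⟨∑ k ∈ Finset.range (b - a).toNat,
    map (P (a + k) - P (a + k + 1)).dualMap (P (a + k)) c₀, sum_mem fun k _ => ?_, fun m => ?_⟩
  · refine Submodule.mem_iSup_of_mem (-(a + k)) ?_
    beta_reduce
    rw [show 1 - -(a + k) = a + k + 1 by ring, show (0 : ℤ) - -(a + k) = a + k by ring]
    refine map_dualMap_mem_range_map_subtype (fun y hy => ?_) (range_le_iff_comap.mpr ?_) c₀
    · rw [mem_ker, LinearMap.sub_apply, (hP _).map_id y hy, (hP _).map_id y (hF (by omega) hy),
        sub_self]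
    · exact Submodule.eq_top_iff'.mpr fun y => (hP _).map_mem y
  have hPa : P a m = m := (hP a).map_id m (by simp [ha a le_rfl])
  have hPb : P (a + (b - a).toNat) m = 0 := by
    have := (hP (a + (b - a).toNat)).map_mem m
    rwa [hb _ (by omega), Submodule.mem_bot] at this
  simp only [lift_lsmul_comp_applyₗ_eq_dualTensorHom, map_sum, dualTensorHom_map_dualMap, hc₀,
    comp_apply, id_apply, LinearMap.sub_apply]
  rw [sum_isProj_comp_sub_telescope hF hP, hPa, hPb, sub_zero]

/-- **The dual filtration makes the dual module a dual in the category of filtered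
modules.**
Let `M` be a finitely generated projective `R`-module with a decreasing exhaustive
separated filtration `F` by direct summands with finitely generated projective
quotients.  Equip the dual `M* = Hom(M, R)` with the filtration
`Fⁿ M* = (F^{1-n} M)^⊥` and tensor products with the filtration
`Fⁿ(M ⊗ N) = Σ_{i+j=n} Fⁱ M ⊗ Fʲ N`.  Then the evaluation `ev : M ⊗ M* → R` maps
`Fⁿ(M ⊗ M*)` into `Fⁿ R` (so is zero on `Fⁿ` for `n ≥ 1`), and there is a
coevaluation element `c = δ(1) ∈ F⁰(M* ⊗ M)` witnessing the duality:
`Σ fᵢ(m)·eᵢ = m` for all `m`. -/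
theorem statement17 {R M : Type*} [CommRing R] [AddCommGroup M] [Module R M]
    [Module.Finite R M] [Module.Projective R M]
    (F : ℤ → Submodule R M) (hF : Antitone F)
    (a b : ℤ) (ha : ∀ i ≤ a, F i = ⊤) (hb : ∀ i, b ≤ i → F i = ⊥)
    (hsummand : ∀ n : ℤ, ∃ C : Submodule R M, IsCompl (F n) C)
    (hquotproj : ∀ n : ℤ, Module.Projective R (M ⧸ F n))
    (hquotfin : ∀ n : ℤ, Module.Finite R (M ⧸ F n)) :
    -- dual filtration
    letI FD : ℤ → Submodule R (Module.Dual R M) :=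
      fun n => (F (1 - n)).dualAnnihilator
    -- tensor filtration on M ⊗ M*
    letI FT : ℤ → Submodule R (M ⊗[R] Module.Dual R M) :=
      fun n => ⨆ i : ℤ,
        LinearMap.range (TensorProduct.map (F i).subtype (FD (n - i)).subtype)
    -- tensor filtration on M* ⊗ M
    letI FT' : ℤ → Submodule R (Module.Dual R M ⊗[R] M) :=
      fun n => ⨆ i : ℤ,
        LinearMap.range (TensorProduct.map (FD i).subtype (F (n - i)).subtype)
    -- evaluation respects the filtrations: `ev(Fⁿ(M ⊗ M*)) ⊆ Fⁿ R = 0` for `n ≥ 1`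
    (∀ n : ℤ, 1 ≤ n → ∀ x ∈ FT n, contractRight R M x = 0) ∧
    -- coevaluation: `δ(1) ∈ F⁰(M* ⊗ M)` and it witnesses the duality
    (∃ c ∈ FT' 0, ∀ m : M,
      TensorProduct.lift ((LinearMap.lsmul R M).comp (LinearMap.applyₗ m)) c = m) :=
  statement17_general F hF a b ha hb hsummand
end
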